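/- arXiv:2308.08670 — 7 statements merged into one kernel-verified Lean document; each statement's English description precedes it below -/
import Mathlib

section
/- Let V be a set and d : V → V → ℝ a function satisfying d(x,y) ≥ 0 for all x,y ∈ V and the triangle inequality d(x,z) ≤ d(x,y) + d(y,z) for all x,y,z ∈ V. Let v, y, z, t ∈ V and suppose d(v,y) = d(v,z) + d(z,y) (i.e., z lies on a shortest path from v to y). If d(y,t) + 2·d(v,y) ≤ d(t,y) + 2·d(v,t), then d(z,t) + 2·d(v,z) ≤ d(t,z) + 2·d(v,t). -/
/-- If `d` is a nonnegative function satisfying the (directed) triangle inequality,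
`z` lies on a shortest path from `v` to `y` (i.e. `d v y = d v z + d z y`), and
`d y t + 2·d v y ≤ d t y + 2·d v t`, then `d z t + 2·d v z ≤ d t z + 2·d v t`. -/
theorem restricted_neighborhood_closed_under_shortest_paths
    {V : Type*} (d : V → V → ℝ)
    (hnonneg : ∀ x y : V, 0 ≤ d x y)
    (htri : ∀ x y z : V, d x z ≤ d x y + d y z)
    (v y z t : V)
    (hz : d v y = d v z + d z y)
    (hy : d y t + 2 * d v y ≤ d t y + 2 * d v t) :
    d z t + 2 * d v z ≤ d t z + 2 * d v t := by
  have h1 := htri z y t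
  have h2 := htri t z y
  linarith
end

section
/- Let G be a simple graph on a finite vertex set V, let t ≥ 1 be a natural number, and let E_a, E_b be two subsets of the edge set of G. Let G' be the simple graph obtained as follows: take two disjoint copies V×{a} and V×{b} of V; for each edge {u,v} ∈ E_a add a path of exactly t edges (with t−1 new internal vertices) joining u^a and v^a; for each edge {u,v} ∈ E_b add a path of exactly t edges (with t−1 new internal vertices) joining u^b and v^b; and add the edge {u^a, u^b} for every u ∈ V. If there exists an edge e ∈ E_a ∩ E_b, then G' contains a cycle of length exactly 2t + 2; in particular the girth of G' is at most 2t + 2. -/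
/-- Generating relation for the two-copy construction `G'`: two disjoint copies
(`Bool` component: `false` = copy a, `true` = copy b) of the vertex set `V`,
where each edge `{a,b}` (with `a < b`) of `Ea` (resp. `Eb`) is replaced in copy a
(resp. copy b) by a path of exactly `t` edges with `t-1` fresh internal vertices
(indexed by `Fin (t-1)`), together with a crossing edge `{uᵃ, uᵇ}` for each `u ∈ V`. -/
def pathCopyRel {V : Type*} [LinearOrder V] (t : ℕ) (Ea Eb : Set (Sym2 V)) :
    ((V × Bool) ⊕ (V × V × Bool × Fin (t - 1))) →
      ((V × Bool) ⊕ (V × V × Bool × Fin (t - 1))) → Prop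
  | .inl (u, c), .inl (w, c') =>
      (u = w ∧ c ≠ c') ∨
        (t = 1 ∧ c = c' ∧ u < w ∧ s(u, w) ∈ (if c then Eb else Ea))
  | .inl (w, c0), .inr (a, b, c, j) =>
      c0 = c ∧ a < b ∧ s(a, b) ∈ (if c then Eb else Ea) ∧
        ((w = a ∧ (j : ℕ) = 0) ∨ (w = b ∧ (j : ℕ) = t - 2))
  | .inr (a, b, c, j), .inr (a', b', c', j') =>
      a = a' ∧ b = b' ∧ c = c' ∧ a < b ∧ s(a, b) ∈ (if c then Eb else Ea) ∧
        (j' : ℕ) = (j : ℕ) + 1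
  | .inr _, .inl _ => False

/-- The two-copy construction `G'` as a simple graph. -/
def twoCopyGraph {V : Type*} [LinearOrder V] (t : ℕ) (Ea Eb : Set (Sym2 V)) :
    SimpleGraph ((V × Bool) ⊕ (V × V × Bool × Fin (t - 1))) :=
  SimpleGraph.fromRel (pathCopyRel t Ea Eb)

section Aux

variable {V : Type*} [LinearOrder V] {t : ℕ} {Ea Eb : Set (Sym2 V)}

lemma tcg_adj_cross (u : V) : (twoCopyGraph t Ea Eb).Adj (.inl (u, false)) (.inl (u, true)) := by
  rw [twoCopyGraph, SimpleGraph.fromRel_adj]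
  exact ⟨by simp, Or.inl (Or.inl ⟨rfl, by simp⟩)⟩

variable {a b : V} {c : Bool}

lemma tcg_adj_t1 (hab : a < b) (hm : s(a, b) ∈ (if c then Eb else Ea)) (h1 : t = 1) : (twoCopyGraph t Ea Eb).Adj (.inl (a, c)) (.inl (b, c)) := by
  rw [twoCopyGraph, SimpleGraph.fromRel_adj]
  exact ⟨by simp [hab.ne], Or.inl (Or.inr ⟨h1, rfl, hab, hm⟩)⟩

lemma tcg_adj_start (hab : a < b) (hm : s(a, b) ∈ (if c then Eb else Ea)) {j : Fin (t - 1)} (hj : (j : ℕ) = 0) :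
    (twoCopyGraph t Ea Eb).Adj (.inl (a, c)) (.inr (a, b, c, j)) := by
  rw [twoCopyGraph, SimpleGraph.fromRel_adj]
  exact ⟨by simp, Or.inl ⟨rfl, hab, hm, Or.inl ⟨rfl, hj⟩⟩⟩

lemma tcg_adj_end (hab : a < b) (hm : s(a, b) ∈ (if c then Eb else Ea)) {j : Fin (t - 1)} (hj : (j : ℕ) = t - 2) :
    (twoCopyGraph t Ea Eb).Adj (.inr (a, b, c, j)) (.inl (b, c)) := by
  rw [twoCopyGraph, SimpleGraph.fromRel_adj]
  exact ⟨by simp, Or.inr ⟨rfl, hab, hm, Or.inr ⟨rfl, hj⟩⟩⟩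

lemma tcg_adj_step (hab : a < b) (hm : s(a, b) ∈ (if c then Eb else Ea)) {j j' : Fin (t - 1)} (hj : (j' : ℕ) = (j : ℕ) + 1) :
    (twoCopyGraph t Ea Eb).Adj (.inr (a, b, c, j)) (.inr (a, b, c, j')) := by
  rw [twoCopyGraph, SimpleGraph.fromRel_adj]
  refine ⟨?_, Or.inl ⟨rfl, rfl, rfl, hab, hm, hj⟩⟩
  simp only [ne_eq, Sum.inr.injEq, Prod.mk.injEq, true_and]
  intro h
  rw [Fin.ext_iff, hj] at h
  omega

/-- the descending segment: from internal vertex `t-2-k` to the endpoint `bᶜ`. -/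
def tcgSeg (hab : a < b) (hm : s(a, b) ∈ (if c then Eb else Ea)) (ht2 : 2 ≤ t) :
    (k : ℕ) → k ≤ t - 2 →
      (twoCopyGraph t Ea Eb).Walk (.inr (a, b, c, ⟨t - 2 - k, by omega⟩)) (.inl (b, c))
  | 0, _ => SimpleGraph.Walk.cons (tcg_adj_end hab hm (by simp)) SimpleGraph.Walk.nil
  | k + 1, hk => SimpleGraph.Walk.cons
      (tcg_adj_step hab hm (j' := ⟨t - 2 - k, by omega⟩) (by simp; omega))
      (tcgSeg hab hm ht2 k (by omega))

lemma tcgSeg_length (hab : a < b) (hm : s(a, b) ∈ (if c then Eb else Ea)) (ht2 : 2 ≤ t) (k : ℕ) (hk : k ≤ t - 2) :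
    (tcgSeg hab hm ht2 k hk).length = k + 1 := by
  induction k with
  | zero => rfl
  | succ k ih => simp [tcgSeg, ih (by omega)]

lemma tcgSeg_support (hab : a < b) (hm : s(a, b) ∈ (if c then Eb else Ea)) (ht2 : 2 ≤ t) (k : ℕ) (hk : k ≤ t - 2) :
    ∀ v ∈ (tcgSeg hab hm ht2 k hk).support,
      v = Sum.inl (b, c) ∨ ∃ j : Fin (t - 1), t - 2 - k ≤ (j : ℕ) ∧ v = .inr (a, b, c, j) := by
  induction k with
  | zero =>
    intro v hv
    simp [tcgSeg, SimpleGraph.Walk.support_cons] at hv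
    rcases hv with rfl | rfl
    · exact Or.inr ⟨_, le_rfl, rfl⟩
    · exact Or.inl rfl
  | succ k ih =>
    intro v hv
    rw [tcgSeg, SimpleGraph.Walk.support_cons] at hv
    rcases List.mem_cons.1 hv with rfl | hv
    · exact Or.inr ⟨_, le_rfl, rfl⟩
    · rcases ih (by omega) v hv with h | ⟨j, hj, rfl⟩
      · exact Or.inl h
      · exact Or.inr ⟨j, by omega, rfl⟩

lemma tcgSeg_isPath (hab : a < b) (hm : s(a, b) ∈ (if c then Eb else Ea)) (ht2 : 2 ≤ t) (k : ℕ) (hk : k ≤ t - 2) :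
    (tcgSeg hab hm ht2 k hk).IsPath := by
  induction k with
  | zero =>
    rw [tcgSeg]
    refine SimpleGraph.Walk.IsPath.nil.cons ?_
    simp
  | succ k ih =>
    rw [tcgSeg]
    refine (ih (by omega)).cons ?_
    intro hmem
    rcases tcgSeg_support hab hm ht2 k (by omega) _ hmem with h | ⟨j, hj, h⟩
    · exact absurd h (by simp)
    · rw [Sum.inr.injEq, Prod.mk.injEq, Prod.mk.injEq, Prod.mk.injEq] at h
      have := h.2.2.2
      rw [Fin.ext_iff] at this
      simp at this
      omega

lemma tcgSeg_edges (hab : a < b) (hm : s(a, b) ∈ (if c then Eb else Ea)) (ht2 : 2 ≤ t) (k : ℕ) (hk : k ≤ t - 2) :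
    ∀ ed ∈ (tcgSeg hab hm ht2 k hk).edges,
      ∃ j : Fin (t - 1),
        (Sum.inr (a, b, c, j) : (V × Bool) ⊕ (V × V × Bool × Fin (t - 1))) ∈ ed := by
  induction k with
  | zero =>
    intro ed hed
    simp [tcgSeg] at hed
    subst hed
    exact ⟨_, Sym2.mem_mk_left _ _⟩
  | succ k ih =>
    intro ed hed
    rw [tcgSeg, SimpleGraph.Walk.edges_cons] at hed
    rcases List.mem_cons.1 hed with rfl | hed
    · exact ⟨_, Sym2.mem_mk_left _ _⟩
    · exact ih (by omega) ed hed

end Aux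

section Aux2

variable {V : Type*} [LinearOrder V] {t : ℕ} {Ea Eb : Set (Sym2 V)} {a b : V} {c : Bool}

/-- The path of `t` edges from `aᶜ` to `bᶜ` in copy `c`. -/
def tcgCopyPath (hab : a < b) (hm : s(a, b) ∈ (if c then Eb else Ea)) (ht2 : 2 ≤ t) :
    (twoCopyGraph t Ea Eb).Walk (.inl (a, c)) (.inl (b, c)) :=
  SimpleGraph.Walk.cons
    (tcg_adj_start hab hm (j := ⟨t - 2 - (t - 2), by omega⟩) (by simp))
    (tcgSeg hab hm ht2 (t - 2) le_rfl)

lemma tcgCopyPath_length (hab : a < b) (hm : s(a, b) ∈ (if c then Eb else Ea)) (ht2 : 2 ≤ t) :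
    (tcgCopyPath hab hm ht2).length = t := by
  rw [tcgCopyPath, SimpleGraph.Walk.length_cons, tcgSeg_length]
  omega

lemma tcgCopyPath_support (hab : a < b) (hm : s(a, b) ∈ (if c then Eb else Ea)) (ht2 : 2 ≤ t) :
    ∀ v ∈ (tcgCopyPath hab hm ht2).support,
      v = Sum.inl (a, c) ∨ v = Sum.inl (b, c) ∨ ∃ j : Fin (t - 1), v = .inr (a, b, c, j) := by
  intro v hv
  rw [tcgCopyPath, SimpleGraph.Walk.support_cons] at hv
  rcases List.mem_cons.1 hv with rfl | hv
  · exact Or.inl rfl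
  · rcases tcgSeg_support hab hm ht2 _ _ v hv with h | ⟨j, _, rfl⟩
    · exact Or.inr (Or.inl h)
    · exact Or.inr (Or.inr ⟨j, rfl⟩)

lemma tcgCopyPath_isPath (hab : a < b) (hm : s(a, b) ∈ (if c then Eb else Ea)) (ht2 : 2 ≤ t) :
    (tcgCopyPath hab hm ht2).IsPath := by
  rw [tcgCopyPath]
  refine (tcgSeg_isPath hab hm ht2 _ _).cons ?_
  intro hmem
  rcases tcgSeg_support hab hm ht2 _ _ _ hmem with h | ⟨j, _, h⟩
  · rw [Sum.inl.injEq, Prod.mk.injEq] at h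
    exact hab.ne h.1
  · simp at h

lemma tcgCopyPath_edges (hab : a < b) (hm : s(a, b) ∈ (if c then Eb else Ea)) (ht2 : 2 ≤ t) :
    ∀ ed ∈ (tcgCopyPath hab hm ht2).edges,
      ∃ j : Fin (t - 1),
        (Sum.inr (a, b, c, j) : (V × Bool) ⊕ (V × V × Bool × Fin (t - 1))) ∈ ed := by
  intro ed hed
  rw [tcgCopyPath, SimpleGraph.Walk.edges_cons] at hed
  rcases List.mem_cons.1 hed with rfl | hed
  · exact ⟨_, Sym2.mem_mk_right _ _⟩
  · exact tcgSeg_edges hab hm ht2 _ _ ed hed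

end Aux2

/-- If some edge `e` belongs to both `Ea` and `Eb`, then the two-copy graph `G'`
contains a cycle of length exactly `2t+2`; in particular its girth is at most `2t+2`. -/
theorem twoCopyGraph_short_cycle_of_common_edge
    {V : Type*} [Fintype V] [LinearOrder V] (G : SimpleGraph V)
    (t : ℕ) (ht : 1 ≤ t) (Ea Eb : Set (Sym2 V))
    (hEa : Ea ⊆ G.edgeSet) (hEb : Eb ⊆ G.edgeSet)
    (e : Sym2 V) (he : e ∈ Ea ∩ Eb) :
    (∃ (v : (V × Bool) ⊕ (V × V × Bool × Fin (t - 1)))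
        (c : (twoCopyGraph t Ea Eb).Walk v v), c.IsCycle ∧ c.length = 2 * t + 2) ∧
      (twoCopyGraph t Ea Eb).egirth ≤ ((2 * t + 2 : ℕ) : ℕ∞) := by
  -- extract an ordered pair `a < b` with `s(a,b) ∈ Ea` and `s(a,b) ∈ Eb`
  obtain ⟨a, b, hab, hma, hmb⟩ :
      ∃ a b : V, a < b ∧ s(a, b) ∈ Ea ∧ s(a, b) ∈ Eb := by
    induction e using Sym2.ind with
    | _ x y =>
      have hxy : x ≠ y := (G.mem_edgeSet.1 (hEa he.1)).ne
      rcases hxy.lt_or_gt with h | h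
      · exact ⟨x, y, h, he.1, he.2⟩
      · exact ⟨y, x, h, Sym2.eq_swap ▸ he.1, Sym2.eq_swap ▸ he.2⟩
  have hmF : s(a, b) ∈ (if (false : Bool) then Eb else Ea) := by simpa using hma
  have hmT : s(a, b) ∈ (if (true : Bool) then Eb else Ea) := by simpa using hmb
  have hex : ∃ (v : (V × Bool) ⊕ (V × V × Bool × Fin (t - 1)))
      (c : (twoCopyGraph t Ea Eb).Walk v v), c.IsCycle ∧ c.length = 2 * t + 2 := by
    rcases eq_or_lt_of_le ht with h1 | ht2
    · -- t = 1 : a four-cycle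
      have h1 : t = 1 := h1.symm
      refine ⟨.inl (a, false),
        SimpleGraph.Walk.cons (tcg_adj_cross a)
          (SimpleGraph.Walk.cons (tcg_adj_t1 hab hmT h1)
            (SimpleGraph.Walk.cons (tcg_adj_cross b).symm
              (SimpleGraph.Walk.cons (tcg_adj_t1 hab hmF h1).symm SimpleGraph.Walk.nil))),
        ?_, by simp [h1]⟩
      rw [SimpleGraph.Walk.cons_isCycle_iff]
      constructor
      · rw [SimpleGraph.Walk.isPath_def]
        simp [hab.ne, hab.ne', Sym2.eq_iff]
      · simp [Sym2.eq_iff, hab.ne, hab.ne']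
    · -- t ≥ 2 : the long cycle through the subdivided edge in both copies
      have ht2 : 2 ≤ t := ht2
      set Pf := tcgCopyPath hab hmF ht2 with hPf
      set Pt := tcgCopyPath hab hmT ht2 with hPt
      set p := Pt.append (SimpleGraph.Walk.cons (tcg_adj_cross b).symm Pf.reverse) with hp
      refine ⟨.inl (a, false), SimpleGraph.Walk.cons (tcg_adj_cross a) p, ?_, ?_⟩
      · rw [SimpleGraph.Walk.cons_isCycle_iff]
        constructor
        · -- `p` is a path
          rw [SimpleGraph.Walk.isPath_def, hp, SimpleGraph.Walk.support_append,
            SimpleGraph.Walk.support_cons, List.tail_cons, SimpleGraph.Walk.support_reverse]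
          refine List.Nodup.append ((tcgCopyPath_isPath hab hmT ht2).support_nodup)
            (List.nodup_reverse.2 (tcgCopyPath_isPath hab hmF ht2).support_nodup) ?_
          intro v hvT hvF
          rw [List.mem_reverse] at hvF
          rcases tcgCopyPath_support hab hmT ht2 v hvT with rfl | rfl | ⟨j, rfl⟩ <;>
            rcases tcgCopyPath_support hab hmF ht2 _ hvF with h | h | ⟨j', h⟩ <;>
              simp_all
        · -- the closing edge is not among the edges of `p`
          intro hmem
          rw [hp, SimpleGraph.Walk.edges_append, SimpleGraph.Walk.edges_cons,
            SimpleGraph.Walk.edges_reverse] at hmem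
          rcases List.mem_append.1 hmem with hmem | hmem
          · obtain ⟨j, hj⟩ := tcgCopyPath_edges hab hmT ht2 _ hmem
            rw [Sym2.mem_iff] at hj
            rcases hj with h | h <;> exact absurd h (by simp)
          · rcases List.mem_cons.1 hmem with h | hmem
            · rw [Sym2.eq_iff] at h
              simp [hab.ne, hab.ne'] at h
            · rw [List.mem_reverse] at hmem
              obtain ⟨j, hj⟩ := tcgCopyPath_edges hab hmF ht2 _ hmem
              rw [Sym2.mem_iff] at hj
              rcases hj with h | h <;> exact absurd h (by simp)
      · rw [SimpleGraph.Walk.length_cons, hp, SimpleGraph.Walk.length_append,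
          SimpleGraph.Walk.length_cons, SimpleGraph.Walk.length_reverse, hPf, hPt,
          tcgCopyPath_length, tcgCopyPath_length]
        ring
  refine ⟨hex, ?_⟩
  obtain ⟨v, C, hC, hlen⟩ := hex
  calc (twoCopyGraph t Ea Eb).egirth ≤ (C.length : ℕ∞) := by
        rw [SimpleGraph.egirth]
        exact iInf_le_of_le v (iInf_le_of_le C (iInf_le _ hC))
    _ = _ := by rw [hlen]
end

section
/- Let G be a simple graph on a finite vertex set V whose girth is at least 2k+1 (k ≥ 1), let t ≥ 1 be a natural number, and let E_a, E_b be two subsets of the edge set of G with E_a ∩ E_b = ∅. Let G' be the simple graph obtained as follows: take two disjoint copies V×{a} and V×{b} of V; for each edge {u,v} ∈ E_a add a path of exactly t edges (with t−1 new internal vertices) joining u^a and v^a; for each edge {u,v} ∈ E_b add a path of exactly t edges (with t−1 new internal vertices) joining u^b and v^b; and add the edge {u^a, u^b} for every u ∈ V. Then every cycle of G' has length at least (2k+1)·t; in particular the girth of G' is at least (2k+1)·t. -/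
/-!
Every cycle of `G'` passes through a vertex of `V × Bool`. Walking along it, each subdivided
edge that the cycle enters is run through completely, since its internal vertices have
degree two; it contributes `t` edges to the cycle and one edge to a closed walk `W` in `G`,
while crossing edges contribute nothing to `W`. `W` never backtracks: going back along the
same subdivided edge would repeat an edge of the cycle, and going back along the same edge of
`G` in the other copy is excluded by `Ea ∩ Eb = ∅`. A non-backtracking closed walk contains a
cycle of `G` built from its edges, so it has length at least `2k+1`.
-/

open SimpleGraph

namespace SimpleGraph.Walk

variable {V : Type*} {G : SimpleGraph V}

/-- In the acyclic case a non-backtracking walk would be a path, and a closed path is trivial;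
so the graph spanned by the walk has a cycle, which uses only edges of the walk. -/
theorem egirth_le_length_of_isChain_ne {v : V} (W : G.Walk v v) (hW : ¬W.Nil)
    (hchain : W.edges.IsChain (· ≠ ·)) : G.egirth ≤ W.length := by
  let H := W.toSubgraph.spanningCoe
  have hWH : ∀ e ∈ W.edges, e ∈ H.edgeSet := fun e he => by
    simpa [H, Subgraph.edgeSet_spanningCoe] using he
  have hcyclic : ¬H.IsAcyclic := fun hH => hW <| by
    have hpath := (hH.isPath_iff_isChain (W.transfer H hWH)).2 (by rwa [edges_transfer])
    rw [isPath_iff_nil, ← length_eq_zero_iff, length_transfer] at hpath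
    exact length_eq_zero_iff.1 hpath
  obtain ⟨x, C, hC, hHC⟩ := exists_egirth_eq_length.2 hcyclic
  have hCW : C.edges ⊆ W.edges := fun e he => by
    simpa [H, Subgraph.edgeSet_spanningCoe] using C.edges_subset_edgeSet he
  calc G.egirth ≤ H.egirth := egirth_anti W.toSubgraph.spanningCoe_le
    _ = C.length := hHC
    _ ≤ W.length := by simpa using (hC.edges_nodup.subperm hCW).length_le

end SimpleGraph.Walk

lemma eq_of_mem_ite_of_inter_eq_empty {α : Type*} {Ea Eb : Set α} (hdisj : Ea ∩ Eb = ∅)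
    {e : α} {c c' : Bool} (h : e ∈ (if c then Eb else Ea)) (h' : e ∈ (if c' then Eb else Ea)) :
    c = c' := by
  rw [Set.eq_empty_iff_forall_notMem] at hdisj
  cases c <;> cases c' <;> simp_all

section TwoCopyGraph

variable {V : Type*} [LinearOrder V] {t : ℕ} {Ea Eb : Set (Sym2 V)}

/-- The vertex at distance `i` from `(u, c)` on the path of copy `c` subdividing `s(u, w)`;
internal vertices are indexed from the smaller endpoint, whence the two branches. -/
def subdivVertex (t : ℕ) (u w : V) (c : Bool) (i : ℕ) :
    (V × Bool) ⊕ (V × V × Bool × Fin (t - 1)) :=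
  if h : 0 < i ∧ i < t then
    if u < w then .inr (u, w, c, ⟨i - 1, by omega⟩) else .inr (w, u, c, ⟨t - 1 - i, by omega⟩)
  else if i = 0 then .inl (u, c) else .inl (w, c)

@[simp] lemma subdivVertex_zero (u w : V) (c : Bool) :
    subdivVertex t u w c 0 = .inl (u, c) := by
  simp [subdivVertex]

lemma subdivVertex_last (ht : 1 ≤ t) (u w : V) (c : Bool) :
    subdivVertex t u w c t = .inl (w, c) := by
  rw [subdivVertex, dif_neg (by omega), if_neg (by omega)]

lemma subdivVertex_of_lt {u w : V} (huw : u < w) (c : Bool) {i : ℕ} (hi : 0 < i) (hit : i < t) :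
    subdivVertex t u w c i = .inr (u, w, c, ⟨i - 1, by omega⟩) := by
  simp [subdivVertex, hi, hit, huw]

lemma subdivVertex_swap (ht : 1 ≤ t) {u w : V} (huw : u ≠ w) (c : Bool) {i : ℕ} (hi : i ≤ t) :
    subdivVertex t w u c i = subdivVertex t u w c (t - i) := by
  unfold subdivVertex
  rcases huw.lt_or_gt with h | h <;> split_ifs <;> first | omega | simp_all [h.not_gt] <;> omega

lemma subdivVertex_ne_inl {u w : V} {c : Bool} {i : ℕ} (hi : 0 < i) (hit : i < t)
    (y : V × Bool) : subdivVertex t u w c i ≠ .inl y := by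
  unfold subdivVertex; split_ifs <;> simp_all

lemma twoCopyGraph_adj_inl {u : V} {c : Bool} {y}
    (h : (twoCopyGraph t Ea Eb).Adj (.inl (u, c)) y) :
    y = .inl (u, !c) ∨
      ∃ w, u ≠ w ∧ s(u, w) ∈ (if c then Eb else Ea) ∧ y = subdivVertex t u w c 1 := by
  rcases y with ⟨w, c'⟩ | ⟨a, b, c', j⟩ <;>
    simp only [twoCopyGraph, fromRel_adj, pathCopyRel, or_false] at h
  · obtain ⟨-, (⟨rfl, hc⟩ | ⟨rfl, rfl, hlt, hE⟩) | (⟨rfl, hc⟩ | ⟨rfl, rfl, hlt, hE⟩)⟩ := h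
    · exact .inl (by rw [Bool.eq_not.2 hc.symm])
    · exact .inr ⟨w, hlt.ne, hE, by simp [subdivVertex]⟩
    · exact .inl (by rw [Bool.eq_not.2 hc])
    · exact .inr ⟨w, hlt.ne', by rwa [Sym2.eq_swap], by simp [subdivVertex]⟩
  · obtain ⟨-, rfl, hab, hE, ⟨rfl, hj⟩ | ⟨rfl, hj⟩⟩ := h <;> have := j.isLt
    · refine .inr ⟨b, hab.ne, hE, ?_⟩
      rw [subdivVertex_of_lt hab c one_pos (by omega)]
      simp only [Sum.inr.injEq, Prod.mk.injEq, Fin.ext_iff, true_and]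
      omega
    · refine .inr ⟨a, hab.ne', by rwa [Sym2.eq_swap], ?_⟩
      rw [subdivVertex_swap (by omega) hab.ne c (by omega),
        subdivVertex_of_lt hab c (by omega) (by omega)]
      simp only [Sum.inr.injEq, Prod.mk.injEq, Fin.ext_iff, true_and]
      omega

lemma twoCopyGraph_adj_subdivVertex {u w : V} {c : Bool} {i : ℕ} (hi : 0 < i) (hit : i < t) {y}
    (h : (twoCopyGraph t Ea Eb).Adj (subdivVertex t u w c i) y) :
    y = subdivVertex t u w c (i - 1) ∨ y = subdivVertex t u w c (i + 1) := by
  wlog huw : u < w generalizing u w i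
  · rcases (not_lt.1 huw).lt_or_eq with hwu | rfl
    · have hswap (j : ℕ) (hj : j ≤ t) := subdivVertex_swap (t := t) (by omega) hwu.ne c hj
      rw [hswap i hit.le] at h
      rw [hswap _ (by omega), hswap _ (by omega), show t - (i - 1) = t - i + 1 by omega,
        show t - (i + 1) = t - i - 1 by omega, or_comm]
      exact this (by omega) (by omega) h hwu
    · exfalso
      obtain ⟨j, hj⟩ : ∃ j, subdivVertex t w w c i = .inr (w, w, c, j) :=
        ⟨⟨t - 1 - i, by omega⟩, by simp [subdivVertex, hi, hit]⟩
      rw [hj] at h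
      rcases y with ⟨v, c'⟩ | ⟨a, b, c', j'⟩ <;>
        simp only [twoCopyGraph, fromRel_adj, pathCopyRel, false_or] at h
      · exact lt_irrefl w h.2.2.1
      · obtain ⟨-, ⟨-, -, -, hlt, -⟩ | ⟨rfl, rfl, -, hlt, -⟩⟩ := h <;> exact lt_irrefl _ hlt
  rw [subdivVertex_of_lt huw c hi hit] at h
  rcases y with ⟨v, c'⟩ | ⟨a, b, c', j⟩ <;>
    simp only [twoCopyGraph, fromRel_adj, pathCopyRel, false_or] at h
  · obtain ⟨-, rfl, -, -, ⟨rfl, hj⟩ | ⟨rfl, hj⟩⟩ := h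
    · left; rw [show i - 1 = 0 by omega, subdivVertex_zero]
    · right; rw [show i + 1 = t by omega, subdivVertex_last (by omega)]
  · obtain ⟨-, ⟨rfl, rfl, rfl, -, -, hj⟩ | ⟨rfl, rfl, rfl, -, -, hj⟩⟩ := h <;> have := j.isLt
    · right
      rw [subdivVertex_of_lt huw _ (by omega) (by omega)]
      simp only [Sum.inr.injEq, Prod.mk.injEq, Fin.ext_iff, true_and]
      omega
    · left
      rw [subdivVertex_of_lt huw _ (by omega) (by omega)]
      simp only [Sum.inr.injEq, Prod.mk.injEq, Fin.ext_iff, true_and]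
      omega

/-- A trail that enters the path subdividing `s(u, w)` at its `i`-th vertex and does not turn
back runs through to `(w, c)`, since internal vertices have degree two. The suffix records that
the last edge of the path precedes the rest `q` of the trail. -/
lemma exists_walk_suffix_of_subdivVertex (ht : 1 ≤ t) {u w : V} {c : Bool} {y : V × Bool}
    {i : ℕ} {x} (p : (twoCopyGraph t Ea Eb).Walk x (.inl y)) (hx : subdivVertex t u w c i = x)
    (hi : 0 < i) (hit : i ≤ t) (hp : p.edges.Nodup)
    (hback : s(subdivVertex t u w c (i - 1), x) ∉ p.edges) :
    ∃ q : (twoCopyGraph t Ea Eb).Walk (.inl (w, c)) (.inl y), t - i + q.length ≤ p.length ∧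
      s(subdivVertex t u w c (t - 1), .inl (w, c)) :: q.edges <:+
        s(subdivVertex t u w c (i - 1), x) :: p.edges := by
  obtain ⟨n, hn⟩ : ∃ n, i + n = t := ⟨t - i, by omega⟩
  induction n generalizing i x with
  | zero =>
    obtain rfl : i = t := hn
    obtain rfl : x = .inl (w, c) := hx.symm.trans (subdivVertex_last ht u w c)
    exact ⟨p, by omega, List.suffix_refl _⟩
  | succ n ih =>
    cases p with
    | nil => exact absurd hx (subdivVertex_ne_inl hi (by omega) y)
    | @cons _ z _ h p =>
      subst hx
      rw [Walk.edges_cons, List.nodup_cons] at hp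
      rcases twoCopyGraph_adj_subdivVertex hi (by omega) h with rfl | rfl
      · exact absurd (Walk.edges_cons h p ▸ List.mem_cons_self ..) (Sym2.eq_swap ▸ hback)
      · obtain ⟨q, hlen, hsuf⟩ := ih p rfl (by omega) (by omega) hp.2 hp.1 (by omega)
        refine ⟨q, by rw [Walk.length_cons]; omega, hsuf.trans ?_⟩
        rw [Walk.edges_cons, Nat.add_sub_cancel]
        exact List.suffix_cons _ _

/-- `W` is the projection of the trail `p` to `G`. The third conjunct says through which
subdivided edge `p` reaches the first edge of `W`; it is what keeps `W` non-backtracking when a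
further edge is put in front. -/
theorem exists_isChain_ne_walk_of_edges_nodup (G : SimpleGraph V) (hEa : Ea ⊆ G.edgeSet)
    (hEb : Eb ⊆ G.edgeSet) (hdisj : Ea ∩ Eb = ∅) (ht : 1 ≤ t) {y : V × Bool} {u : V} {c : Bool}
    (p : (twoCopyGraph t Ea Eb).Walk (.inl (u, c)) (.inl y)) (hp : p.edges.Nodup) :
    ∃ W : G.Walk u y.1, t * W.length ≤ p.length ∧ W.edges.IsChain (· ≠ ·) ∧
      (∀ e ∈ W.edges.head?, ∃ c' w, e = s(u, w) ∧ e ∈ (if c' then Eb else Ea) ∧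
        s(.inl (u, c'), subdivVertex t u w c' 1) ∈ p.edges) ∧
      (W.Nil → ∀ e ∈ p.edges, e = s(.inl (u, c), .inl (u, !c))) := by
  induction hn : p.length using Nat.strong_induction_on generalizing u c p with
  | _ n ih =>
  cases p with
  | nil => exact ⟨.nil, by simp, List.isChain_nil, by simp, by simp⟩
  | @cons _ z _ h p =>
    rw [Walk.edges_cons, List.nodup_cons] at hp
    rcases twoCopyGraph_adj_inl h with rfl | ⟨w, huw, hE, rfl⟩
    · obtain ⟨W, hlen, hchain, hhead, hnil⟩ := ih p.length (by simp [← hn]) p hp.2 rfl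
      refine ⟨W, by rw [← hn, Walk.length_cons]; omega, hchain, fun e he => ?_, fun hW e he => ?_⟩
      · obtain ⟨c', w, h1, h2, h3⟩ := hhead e he
        exact ⟨c', w, h1, h2, List.mem_cons_of_mem _ h3⟩
      · rw [Walk.edges_cons, List.mem_cons] at he
        rcases he with rfl | he
        · rfl
        · rw [hnil hW e he, Bool.not_not, Sym2.eq_swap]
    · obtain ⟨q, hqlen, hsuf⟩ := exists_walk_suffix_of_subdivVertex ht p rfl one_pos ht hp.2
        (by simpa using hp.1)
      have hq := hsuf.sublist.nodup (List.nodup_cons.2 (by simpa using hp))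
      rw [List.nodup_cons] at hq
      obtain ⟨W, hlen, hchain, hhead, -⟩ :=
        ih q.length (by rw [← hn, Walk.length_cons]; omega) q hq.2 rfl
      have hGuw : G.Adj u w := by
        cases c
        · exact hEa hE
        · exact hEb hE
      refine ⟨.cons hGuw W, ?_, ?_, ?_, by simp⟩
      · rw [← hn, Walk.length_cons, Walk.length_cons, Nat.mul_succ]; omega
      · rw [Walk.edges_cons, List.isChain_cons]
        refine ⟨fun e he heq => ?_, hchain⟩
        obtain ⟨c', z, rfl, hE', hmem⟩ := hhead e he
        obtain rfl := eq_of_mem_ite_of_inter_eq_empty hdisj hE (heq ▸ hE')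
        obtain rfl : z = u := by
          rcases Sym2.eq_iff.1 heq with ⟨rfl, -⟩ | ⟨rfl, -⟩
          · exact absurd rfl huw
          · rfl
        rw [subdivVertex_swap ht huw c ht, Sym2.eq_swap] at hmem
        exact hq.1 hmem
      · intro e he
        rw [Walk.edges_cons, List.head?_cons, Option.mem_some_iff] at he
        subst he
        exact ⟨c, w, rfl, hE, by simp⟩

/-- At a vertex of largest index on a cycle through internal vertices only, both cycle
neighbours would be its predecessor on the subdivided edge. -/
lemma exists_inl_mem_support_of_isCycle {v} {p : (twoCopyGraph t Ea Eb).Walk v v}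
    (hp : p.IsCycle) : ∃ x, .inl x ∈ p.support := by
  by_contra! hinl
  let index : (V × Bool) ⊕ (V × V × Bool × Fin (t - 1)) → ℕ := Sum.elim 0 fun z => z.2.2.2
  obtain ⟨m, hm, hmax⟩ := p.support.toFinset.exists_max_image index ⟨v, by simp⟩
  rw [List.mem_toFinset] at hm
  obtain ⟨⟨a, b, c, j⟩, rfl⟩ : ∃ z, m = .inr z := by
    cases m
    · exact absurd hm (hinl _)
    · exact ⟨_, rfl⟩
  have hnbr : p.toSubgraph.neighborSet (.inr (a, b, c, j)) ⊆
      {.inr (a, b, c, ⟨j - 1, by omega⟩)} := by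
    intro y hy
    have hy_mem : y ∈ p.support := p.mem_verts_toSubgraph.1 hy.snd_mem
    obtain ⟨⟨a', b', c', j'⟩, rfl⟩ : ∃ z, y = .inr z := by
      cases y
      · exact absurd hy_mem (hinl _)
      · exact ⟨_, rfl⟩
    have hj' : (j' : ℕ) ≤ j := hmax _ (List.mem_toFinset.2 hy_mem)
    have hadj := hy.adj_sub
    simp only [twoCopyGraph, fromRel_adj, pathCopyRel] at hadj
    obtain ⟨-, ⟨rfl, rfl, rfl, -, -, hj⟩ | ⟨rfl, rfl, rfl, -, -, hj⟩⟩ := hadj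
    · omega
    · simp only [Set.mem_singleton_iff, Sum.inr.injEq, Prod.mk.injEq, Fin.ext_iff, true_and]
      omega
  have hcard := Set.ncard_le_ncard hnbr (Set.finite_singleton _)
  rw [hp.ncard_neighborSet_toSubgraph_eq_two hm, Set.ncard_singleton] at hcard
  omega

end TwoCopyGraph

theorem twoCopyGraph_girth_lower_bound_of_disjoint_general
    {V : Type*} [LinearOrder V] (G : SimpleGraph V)
    (k t : ℕ) (ht : 1 ≤ t)
    (hgirth : ((2 * k + 1 : ℕ) : ℕ∞) ≤ G.egirth)
    (Ea Eb : Set (Sym2 V))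
    (hEa : Ea ⊆ G.edgeSet) (hEb : Eb ⊆ G.edgeSet)
    (hdisj : Ea ∩ Eb = ∅) :
    (∀ (v : (V × Bool) ⊕ (V × V × Bool × Fin (t - 1)))
        (c : (twoCopyGraph t Ea Eb).Walk v v), c.IsCycle → (2 * k + 1) * t ≤ c.length) ∧
      (((2 * k + 1) * t : ℕ) : ℕ∞) ≤ (twoCopyGraph t Ea Eb).egirth := by
  have hcycle (v) (c : (twoCopyGraph t Ea Eb).Walk v v) (hc : c.IsCycle) :
      (2 * k + 1) * t ≤ c.length := by
    obtain ⟨⟨u, b⟩, hu⟩ := exists_inl_mem_support_of_isCycle hc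
    have hc' := hc.rotate hu
    obtain ⟨W, hlen, hchain, -, hnil⟩ :=
      exists_isChain_ne_walk_of_edges_nodup G hEa hEb hdisj ht _ hc'.edges_nodup
    have hW : ¬W.Nil := fun hW => by
      have hsub : (c.rotate _ hu).edges ⊆ [s(Sum.inl (u, b), Sum.inl (u, !b))] := fun e he =>
        List.mem_singleton.2 (hnil hW e he)
      have hle := (hc'.edges_nodup.subperm hsub).length_le
      rw [Walk.length_edges, Walk.length_rotate, List.length_singleton] at hle
      have := hc.three_le_length
      omega
    have hW_len : 2 * k + 1 ≤ W.length := by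
      exact_mod_cast hgirth.trans (W.egirth_le_length_of_isChain_ne hW hchain)
    calc (2 * k + 1) * t ≤ t * W.length := by rw [mul_comm]; exact Nat.mul_le_mul_left t hW_len
      _ ≤ c.length := by rwa [Walk.length_rotate] at hlen
  exact ⟨hcycle, le_egirth.2 fun v c hc => by exact_mod_cast hcycle v c hc⟩

/-- If `G` has girth at least `2k+1` and `Ea`, `Eb` are disjoint subsets of its edge
set, then every cycle of the two-copy graph `G'` has length at least `(2k+1)·t`;
in particular the girth of `G'` is at least `(2k+1)·t`. -/
theorem twoCopyGraph_girth_lower_bound_of_disjoint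
    {V : Type*} [Fintype V] [LinearOrder V] (G : SimpleGraph V)
    (k t : ℕ) (hk : 1 ≤ k) (ht : 1 ≤ t)
    (hgirth : ((2 * k + 1 : ℕ) : ℕ∞) ≤ G.egirth)
    (Ea Eb : Set (Sym2 V))
    (hEa : Ea ⊆ G.edgeSet) (hEb : Eb ⊆ G.edgeSet)
    (hdisj : Ea ∩ Eb = ∅) :
    (∀ (v : (V × Bool) ⊕ (V × V × Bool × Fin (t - 1)))
        (c : (twoCopyGraph t Ea Eb).Walk v v), c.IsCycle → (2 * k + 1) * t ≤ c.length) ∧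
      (((2 * k + 1) * t : ℕ) : ℕ∞) ≤ (twoCopyGraph t Ea Eb).egirth :=
  twoCopyGraph_girth_lower_bound_of_disjoint_general G k t ht hgirth Ea Eb hEa hEb hdisj
end

section
/- Let T be a finite rooted tree with at least two leaves, let u_0 and u_ℓ be two distinct leaves of T such that the paths from the root to u_0 and from the root to u_ℓ share no edge, and let u_1, …, u_{ℓ−1} denote the remaining leaves. Let q ≥ 1 and S_a, S_b : {1,…,q} → Bool. Define a directed graph D as follows: orient every edge of T from parent to child, except the edges on the path from the root to u_ℓ, which are oriented from child to parent; add, for each i ∈ {1,…,q}, fresh vertices v^i_0, v^i_1, …, v^i_ℓ with directed edges v^i_j → v^i_{j+1} for 0 ≤ j < ℓ; add the directed edge u_0 → v^i_0 if and only if S_a(i) = true; add the directed edge v^i_ℓ → u_ℓ if and only if S_b(i) = true; and add directed edges v^i_j → u_j for every i and every 0 < j < ℓ. Then D contains a directed cycle if and only if there exists an index i with S_a(i) = true and S_b(i) = true. -/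
/-- The directed adjacency relation of the lower-bound gadget `D`.  Vertices are either
tree vertices (`Sum.inl`) or path vertices `v^i_j` (`Sum.inr (i, j)`).  Tree edges
`(parent b, b)` are oriented from parent to child, except edges on the path from the
root to the leaf `u (Fin.last ℓ)`, which are oriented from child to parent.  Each path
`v^i_0 → v^i_1 → ⋯ → v^i_ℓ` is directed; the edge `u 0 → v^i_0` is present iff
`Sa i = true`, the edge `v^i_ℓ → u ℓ` is present iff `Sb i = true`, and the edges
`v^i_j → u j` are present for all `0 < j < ℓ`. -/
def gadgetAdj {A : Type*} (root : A) (parent : A → A) (ℓ q : ℕ)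
    (u : Fin (ℓ + 1) → A) (Sa Sb : Fin q → Bool) :
    (A ⊕ (Fin q × Fin (ℓ + 1))) → (A ⊕ (Fin q × Fin (ℓ + 1))) → Prop
  | .inl a, .inl b =>
      (parent b = a ∧ b ≠ root ∧ ¬ (∃ n, parent^[n] (u (Fin.last ℓ)) = b)) ∨
        (parent a = b ∧ a ≠ root ∧ (∃ n, parent^[n] (u (Fin.last ℓ)) = a))
  | .inl a, .inr (i, j) => a = u 0 ∧ (j : ℕ) = 0 ∧ Sa i = true
  | .inr (i, j), .inl a =>
      ((j : ℕ) = ℓ ∧ a = u (Fin.last ℓ) ∧ Sb i = true) ∨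
        (0 < (j : ℕ) ∧ (j : ℕ) < ℓ ∧ a = u j)
  | .inr (i, j), .inr (i', j') => i = i' ∧ (j' : ℕ) = (j : ℕ) + 1

/-!
If `Sa i` and `Sb i` both hold, `u 0 → v^i_0 → ⋯ → v^i_ℓ → u ℓ`, followed by the climb from `u ℓ`
to the root and the descent from the root to `u 0`, is a cycle; the descent uses only edges
oriented downwards because the root paths of `u 0` and `u ℓ` meet only at the root.  Otherwise a
lexicographic potential decreases strictly along every edge, so there is no cycle.
-/

open Relation

section Relation

variable {α : Type*} {r : α → α → Prop}

theorem reflTransGen_of_forall_lt_succ {g : ℕ → α} {n : ℕ}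
    (h : ∀ k < n, r (g k) (g (k + 1))) : ReflTransGen r (g 0) (g n) :=
  (reflTransGen_of_succ_of_le (fun k k' => r (g k) (g k')) (fun k hk => h k hk.2)
    n.zero_le).lift g fun _ _ => id

theorem not_transGen_self_of_forall_lt {β : Type*} [Preorder β] (f : α → β)
    (hf : ∀ a b, r a b → f b < f a) (a : α) : ¬ TransGen r a a := fun h => by
  have := h.lift f (p := (· > ·)) hf
  rw [transGen_eq_self] at this
  exact lt_irrefl _ this

end Relation

section RootedTree

variable {A : Type*} {root : A} {parent : A → A}

open Classical in
noncomputable def treeDepth (hreach : ∀ a, ∃ n, parent^[n] a = root) (a : A) : ℕ :=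
  Nat.find (hreach a)

open Classical in
theorem iterate_treeDepth (hreach : ∀ a, ∃ n, parent^[n] a = root) (a : A) :
    parent^[treeDepth hreach a] a = root :=
  Nat.find_spec (hreach a)

open Classical in
theorem treeDepth_le (hreach : ∀ a, ∃ n, parent^[n] a = root) {a : A} {n : ℕ}
    (hn : parent^[n] a = root) : treeDepth hreach a ≤ n :=
  Nat.find_min' (hreach a) hn

theorem iterate_ne_root_of_lt_treeDepth (hreach : ∀ a, ∃ n, parent^[n] a = root) {a : A} {k : ℕ}
    (hk : k < treeDepth hreach a) : parent^[k] a ≠ root :=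
  fun h => (treeDepth_le hreach h).not_gt hk

theorem treeDepth_parent_lt (hreach : ∀ a, ∃ n, parent^[n] a = root) {b : A} (hb : b ≠ root) :
    treeDepth hreach (parent b) < treeDepth hreach b := by
  obtain ⟨m, hm⟩ : ∃ m, treeDepth hreach b = m + 1 :=
    Nat.exists_eq_succ_of_ne_zero fun h0 => hb (by simpa [h0] using iterate_treeDepth hreach b)
  have : parent^[m] (parent b) = root := by
    rw [← Function.iterate_succ_apply, Nat.succ_eq_add_one, ← hm, iterate_treeDepth]
  exact hm ▸ Nat.lt_succ_of_le (treeDepth_le hreach this)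

theorem eq_root_of_parent_eq_self (hreach : ∀ a, ∃ n, parent^[n] a = root) {a : A}
    (ha : parent a = a) : a = root := by
  obtain ⟨n, hn⟩ := hreach a
  rwa [Function.iterate_fixed ha] at hn

theorem eq_of_iterate_eq_of_isLeaf {x : A} (hx : ∀ b, parent b = x → b = x) :
    ∀ {n : ℕ} {y : A}, parent^[n] y = x → y = x
  | 0, _, h => h
  | _ + 1, _, h => hx _ (eq_of_iterate_eq_of_isLeaf hx h)

end RootedTree

section Gadget

variable {A : Type*} {root : A} {parent : A → A} {ℓ q : ℕ} {u : Fin (ℓ + 1) → A}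
  {Sa Sb : Fin q → Bool}

def IsInnerLeaf (u : Fin (ℓ + 1) → A) (a : A) : Prop :=
  ∃ j : Fin (ℓ + 1), 0 < (j : ℕ) ∧ (j : ℕ) < ℓ ∧ u j = a

theorem not_exists_iterate_last_eq_of_lt (hinj : Function.Injective u)
    (hleaf : ∀ j : Fin (ℓ + 1), ∀ b : A, parent b = u j → b = u j)
    {j : Fin (ℓ + 1)} (hj : (j : ℕ) < ℓ) : ¬ ∃ n, parent^[n] (u (Fin.last ℓ)) = u j := by
  rintro ⟨n, hn⟩
  have := congrArg Fin.val (hinj (eq_of_iterate_eq_of_isLeaf (hleaf j) hn))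
  simp only [Fin.val_last] at this
  omega

theorem not_isInnerLeaf_of_exists_iterate_last_eq (hinj : Function.Injective u)
    (hleaf : ∀ j : Fin (ℓ + 1), ∀ b : A, parent b = u j → b = u j) {a : A}
    (ha : ∃ n, parent^[n] (u (Fin.last ℓ)) = a) : ¬ IsInnerLeaf u a := by
  rintro ⟨j, -, hj, rfl⟩
  exact not_exists_iterate_last_eq_of_lt hinj hleaf hj ha

theorem not_isInnerLeaf_parent (hreach : ∀ a, ∃ n, parent^[n] a = root)
    (hleaf : ∀ j : Fin (ℓ + 1), ∀ b : A, parent b = u j → b = u j) {b : A} (hb : b ≠ root) :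
    ¬ IsInnerLeaf u (parent b) := by
  rintro ⟨j, -, -, hj⟩
  obtain rfl := hleaf j b hj.symm
  exact hb (eq_root_of_parent_eq_self hreach hj.symm)

/- Layers, from top to bottom: the paths `v^i` with `i ∉ Sa`, the root path of `u ℓ` (climbed,
so ordered by depth), the rest of the tree (descended, so ordered by minus the depth), the paths
`v^i` with `i ∈ Sa`, and the inner leaves, which are sinks.  When no index lies in both `Sa` and
`Sb`, every edge strictly decreases this potential. -/
open Classical in
noncomputable def gadgetPotential (hreach : ∀ a, ∃ n, parent^[n] a = root) (ℓ : ℕ)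
    (u : Fin (ℓ + 1) → A) (Sa : Fin q → Bool) : A ⊕ (Fin q × Fin (ℓ + 1)) → ℕ ×ₗ ℤ
  | .inl a =>
    if IsInnerLeaf u a then toLex (0, 0)
    else if ∃ n, parent^[n] (u (Fin.last ℓ)) = a then toLex (3, treeDepth hreach a)
    else toLex (2, -treeDepth hreach a)
  | .inr (i, j) => toLex (if Sa i then 1 else 4, -j)

theorem gadgetPotential_inl_lt_of_gadgetAdj (hreach : ∀ a, ∃ n, parent^[n] a = root)
    (hinj : Function.Injective u)
    (hleaf : ∀ j : Fin (ℓ + 1), ∀ b : A, parent b = u j → b = u j) {a b : A}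
    (hab : gadgetAdj root parent ℓ q u Sa Sb (.inl a) (.inl b)) :
    gadgetPotential hreach ℓ u Sa (.inl b) < gadgetPotential hreach ℓ u Sa (.inl a) := by
  rcases hab with ⟨rfl, hb, hbanc⟩ | ⟨rfl, ha, hanc⟩
  · have hdepth := treeDepth_parent_lt hreach hb
    simp only [gadgetPotential, if_neg (not_isInnerLeaf_parent hreach hleaf hb), if_neg hbanc]
    split_ifs <;> simp [Prod.Lex.toLex_lt_toLex, hdepth]
  · have hpanc : ∃ n, parent^[n] (u (Fin.last ℓ)) = parent a := by
      obtain ⟨n, rfl⟩ := hanc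
      exact ⟨n + 1, Function.iterate_succ_apply' ..⟩
    simp only [gadgetPotential, if_pos hanc, if_pos hpanc,
      if_neg (not_isInnerLeaf_of_exists_iterate_last_eq hinj hleaf hanc),
      if_neg (not_isInnerLeaf_of_exists_iterate_last_eq hinj hleaf hpanc)]
    simp [Prod.Lex.toLex_lt_toLex, treeDepth_parent_lt hreach ha]

theorem gadgetPotential_lt_of_gadgetAdj (hreach : ∀ a, ∃ n, parent^[n] a = root)
    (hℓ : 1 ≤ ℓ) (hinj : Function.Injective u)
    (hleaf : ∀ j : Fin (ℓ + 1), ∀ b : A, parent b = u j → b = u j)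
    (hSab : ∀ i, Sa i = true → Sb i = false) (x y : A ⊕ (Fin q × Fin (ℓ + 1)))
    (hxy : gadgetAdj root parent ℓ q u Sa Sb x y) :
    gadgetPotential hreach ℓ u Sa y < gadgetPotential hreach ℓ u Sa x := by
  rcases x with a | ⟨i, j⟩ <;> rcases y with b | ⟨i', j'⟩
  · exact gadgetPotential_inl_lt_of_gadgetAdj hreach hinj hleaf hxy
  · obtain ⟨rfl, -, hSa⟩ := hxy
    have hinner : ¬ IsInnerLeaf u (u 0) := by
      rintro ⟨j, hj, -, hj0⟩
      simp [hinj hj0] at hj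
    simp only [gadgetPotential, if_neg hinner,
      if_neg (not_exists_iterate_last_eq_of_lt hinj hleaf (j := 0) hℓ), hSa]
    simp [Prod.Lex.toLex_lt_toLex]
  · rcases hxy with ⟨-, rfl, hSb⟩ | ⟨hj0, hj, rfl⟩
    · have hanc : ∃ n, parent^[n] (u (Fin.last ℓ)) = u (Fin.last ℓ) := ⟨0, rfl⟩
      have hSa : Sa i = false := Bool.eq_false_iff.mpr fun hSa => by simp [hSab i hSa] at hSb
      simp only [gadgetPotential, if_pos hanc,
        if_neg (not_isInnerLeaf_of_exists_iterate_last_eq hinj hleaf hanc), hSa]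
      simp [Prod.Lex.toLex_lt_toLex]
    · have hinner : IsInnerLeaf u (u j) := ⟨j, hj0, hj, rfl⟩
      simp only [gadgetPotential, if_pos hinner]
      split_ifs <;> simp [Prod.Lex.toLex_lt_toLex]
  · obtain ⟨rfl, hj'⟩ := hxy
    simp [gadgetPotential, Prod.Lex.toLex_lt_toLex, hj']

theorem gadgetAdj_reflTransGen_u_last_root (hreach : ∀ a, ∃ n, parent^[n] a = root) :
    ReflTransGen (gadgetAdj root parent ℓ q u Sa Sb) (.inl (u (Fin.last ℓ))) (.inl root) := by
  have := reflTransGen_of_forall_lt_succ (r := gadgetAdj root parent ℓ q u Sa Sb)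
    (g := fun k => .inl (parent^[k] (u (Fin.last ℓ)))) (n := treeDepth hreach (u (Fin.last ℓ)))
    fun k hk => Or.inr ⟨(Function.iterate_succ_apply' ..).symm,
      iterate_ne_root_of_lt_treeDepth hreach hk, k, rfl⟩
  simpa [iterate_treeDepth] using this

theorem gadgetAdj_reflTransGen_root_u_zero (hreach : ∀ a, ∃ n, parent^[n] a = root)
    (hdisj : ∀ x : A, (∃ n, parent^[n] (u 0) = x) →
      (∃ m, parent^[m] (u (Fin.last ℓ)) = x) → x = root) :
    ReflTransGen (gadgetAdj root parent ℓ q u Sa Sb) (.inl root) (.inl (u 0)) := by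
  have := reflTransGen_of_forall_lt_succ (r := Function.swap (gadgetAdj root parent ℓ q u Sa Sb))
    (g := fun k => .inl (parent^[k] (u 0))) (n := treeDepth hreach (u 0))
    fun k hk => Or.inl ⟨(Function.iterate_succ_apply' ..).symm,
      iterate_ne_root_of_lt_treeDepth hreach hk,
      fun hlast => iterate_ne_root_of_lt_treeDepth hreach hk (hdisj _ ⟨k, rfl⟩ hlast)⟩
  simpa [iterate_treeDepth, reflTransGen_swap] using this

open Fin.NatCast in
theorem gadgetAdj_reflTransGen_path (i : Fin q) :
    ReflTransGen (gadgetAdj root parent ℓ q u Sa Sb) (.inr (i, 0)) (.inr (i, Fin.last ℓ)) := by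
  have := reflTransGen_of_forall_lt_succ (r := gadgetAdj root parent ℓ q u Sa Sb)
    (g := fun k => .inr (i, (k : Fin (ℓ + 1)))) (n := ℓ) fun k hk => ⟨rfl, by
      rw [Fin.val_cast_of_lt (by omega), Fin.val_cast_of_lt (by omega)]⟩
  simpa [Fin.natCast_eq_last] using this

end Gadget

theorem gadget_has_directed_cycle_iff_intersect_general
    {A : Type*}
    (root : A) (parent : A → A)
    (hreach : ∀ a : A, ∃ n : ℕ, parent^[n] a = root)
    (ℓ q : ℕ) (hℓ : 1 ≤ ℓ)
    (u : Fin (ℓ + 1) → A) (hinj : Function.Injective u)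
    (hleaf : ∀ j : Fin (ℓ + 1), ∀ b : A, parent b = u j → b = u j)
    (hdisj : ∀ x : A, (∃ n, parent^[n] (u 0) = x) →
      (∃ m, parent^[m] (u (Fin.last ℓ)) = x) → x = root)
    (Sa Sb : Fin q → Bool) :
    (∃ v : A ⊕ (Fin q × Fin (ℓ + 1)),
        Relation.TransGen (gadgetAdj root parent ℓ q u Sa Sb) v v) ↔
      ∃ i : Fin q, Sa i = true ∧ Sb i = true := by
  constructor
  · rintro ⟨v, hv⟩
    by_contra! hSab
    exact not_transGen_self_of_forall_lt (gadgetPotential hreach ℓ u Sa)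
      (gadgetPotential_lt_of_gadgetAdj hreach hℓ hinj hleaf fun i hi => by simpa using hSab i hi)
      v hv
  · rintro ⟨i, hSa, hSb⟩
    have enter : gadgetAdj root parent ℓ q u Sa Sb (.inl (u 0)) (.inr (i, 0)) := ⟨rfl, rfl, hSa⟩
    have leave : gadgetAdj root parent ℓ q u Sa Sb (.inr (i, Fin.last ℓ)) (.inl (u (Fin.last ℓ))) :=
      .inl ⟨rfl, rfl, hSb⟩
    exact ⟨.inl (u 0), .head' enter <| ((gadgetAdj_reflTransGen_path i).tail leave).trans <|
      (gadgetAdj_reflTransGen_u_last_root hreach).trans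
        (gadgetAdj_reflTransGen_root_u_zero hreach hdisj)⟩

/-- For a finite rooted tree (given by `root` and `parent`) whose leaves are exactly
`u 0, u 1, …, u ℓ`, with the root-to-`u 0` and root-to-`u ℓ` paths edge-disjoint,
the directed gadget graph `D` contains a directed cycle if and only if there is an
index `i` with `Sa i = true` and `Sb i = true`. -/
theorem gadget_has_directed_cycle_iff_intersect
    {A : Type*} [Fintype A]
    (root : A) (parent : A → A)
    (hroot : parent root = root)
    (hreach : ∀ a : A, ∃ n : ℕ, parent^[n] a = root)
    (ℓ q : ℕ) (hℓ : 1 ≤ ℓ) (hq : 1 ≤ q)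
    (u : Fin (ℓ + 1) → A) (hinj : Function.Injective u)
    (hleaf : ∀ j : Fin (ℓ + 1), ∀ b : A, parent b = u j → b = u j)
    (hall : ∀ a : A, (∀ b : A, parent b = a → b = a) → ∃ j, u j = a)
    (hdisj : ∀ x : A, (∃ n, parent^[n] (u 0) = x) →
      (∃ m, parent^[m] (u (Fin.last ℓ)) = x) → x = root)
    (Sa Sb : Fin q → Bool) :
    (∃ v : A ⊕ (Fin q × Fin (ℓ + 1)),
        Relation.TransGen (gadgetAdj root parent ℓ q u Sa Sb) v v) ↔
      ∃ i : Fin q, Sa i = true ∧ Sb i = true :=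
  gadget_has_directed_cycle_iff_intersect_general root parent hreach ℓ q hℓ u hinj hleaf hdisj Sa Sb
end

section
/- Let G be a connected simple graph, C a cycle in G, v a vertex on C, {x, y} an edge of C, and w any vertex of G. Then dist(w,x) + dist(w,y) + 1 ≤ length(C) + 2·dist(w,v), where dist denotes shortest-path distance in G and length(C) is the number of edges of C. -/
/-!
Rotating the closed walk to start at `v` and cutting it at the edge `{x, y}` leaves walks
`v ⟶ x` and `y ⟶ v` (or the reverse pair), so `dist v x + dist v y + 1 ≤ length C`; the
triangle inequality through `v` then costs `dist w v` for each of `x` and `y`.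
-/

namespace SimpleGraph.Walk

variable {V : Type*} {G : SimpleGraph V} {u v x y z : V}

theorem dist_add_dist_add_one_le_length_of_isSubwalk (p : G.Walk u z) (h : G.Adj x y)
    (hs : h.toWalk.IsSubwalk p) : G.dist u x + G.dist y z + 1 ≤ p.length := by
  obtain ⟨p₁, p₂, rfl⟩ := hs
  have h₁ := dist_le p₁
  have h₂ := dist_le p₂
  simp only [length_append, Adj.toWalk, length_cons, length_nil]
  omega

theorem dist_add_dist_add_one_le_length (c : G.Walk u u) (he : s(x, y) ∈ c.edges) :
    G.dist u x + G.dist u y + 1 ≤ c.length := by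
  have h := c.adj_of_mem_edges he
  rcases (isSubwalk_toWalk_iff_mem_edges h).mpr he with hs | hs
  · have := c.dist_add_dist_add_one_le_length_of_isSubwalk h hs
    rwa [G.dist_comm (u := y)] at this
  · have := c.dist_add_dist_add_one_le_length_of_isSubwalk h.symm hs
    rw [G.dist_comm (u := x)] at this
    omega

theorem dist_add_dist_add_one_le_length_of_mem_support {a : V} (c : G.Walk a a)
    (hv : v ∈ c.support) (he : s(x, y) ∈ c.edges) :
    G.dist v x + G.dist v y + 1 ≤ c.length := by
  classical
  rw [← c.length_rotate v hv]
  exact dist_add_dist_add_one_le_length _ ((c.rotate_edges v hv).mem_iff.mpr he)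

theorem reachable_of_mem_support {a : V} (c : G.Walk a a) (hu : u ∈ c.support)
    (hv : v ∈ c.support) : G.Reachable u v := by
  classical
  exact (c.takeUntil u hu).reachable.symm.trans (c.takeUntil v hv).reachable

end SimpleGraph.Walk

theorem bfs_cycle_detection_overestimate_general
    {V : Type*} (G : SimpleGraph V)
    {a : V} (c : G.Walk a a)
    (v : V) (hv : v ∈ c.support)
    (x y : V) (he : s(x, y) ∈ c.edges) (w : V) :
    G.dist w x + G.dist w y + 1 ≤ c.length + 2 * G.dist w v := by
  have hvx := c.reachable_of_mem_support hv (c.fst_mem_support_of_mem_edges he)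
  have hvy := c.reachable_of_mem_support hv (c.snd_mem_support_of_mem_edges he)
  calc G.dist w x + G.dist w y + 1
      ≤ (G.dist w v + G.dist v x) + (G.dist w v + G.dist v y) + 1 := by
        gcongr
        · exact hvx.dist_triangle_right w
        · exact hvy.dist_triangle_right w
    _ = (G.dist v x + G.dist v y + 1) + 2 * G.dist w v := by ring
    _ ≤ c.length + 2 * G.dist w v := by
        gcongr
        exact c.dist_add_dist_add_one_le_length_of_mem_support hv he

/-- In a connected graph, for a cycle `C` (based at `a`), a vertex `v` on `C`, an edge
`{x,y}` of `C`, and any vertex `w`, the recorded value `dist w x + dist w y + 1`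
overestimates the length of `C` by at most `2 · dist w v`. -/
theorem bfs_cycle_detection_overestimate
    {V : Type*} (G : SimpleGraph V) (hG : G.Connected)
    {a : V} (c : G.Walk a a) (hc : c.IsCycle)
    (v : V) (hv : v ∈ c.support)
    (x y : V) (he : s(x, y) ∈ c.edges) (w : V) :
    G.dist w x + G.dist w y + 1 ≤ c.length + 2 * G.dist w v :=
  bfs_cycle_detection_overestimate_general G c v hv x y he w
end

section
/- Let G be a simple graph whose girth g is finite, let C be a cycle in G of length exactly g, and let w be any vertex on C. Then there exists an edge {v, x} of C such that g = dist(w,v) + dist(w,x) + 1, where dist denotes shortest-path distance in G. -/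
/-!
A path of length at most half the girth is a geodesic: a shorter path between its ends would,
together with it, contain a cycle shorter than the girth. Applied to the two arcs of a shortest
cycle of length `g`, this puts its `i`-th vertex at distance `min i (g - i)` from the base point,
so the edge joining the vertices at positions `a = ⌊(g - 1) / 2⌋` and `a + 1` has
`a + (g - a - 1) + 1 = g`.
-/

namespace SimpleGraph

variable {V : Type*} {G : SimpleGraph V} {u v : V}

theorem Walk.IsPath.dist_eq_length_of_two_mul_length_le_egirth {p : G.Walk u v}
    (hp : p.IsPath) (hg : 2 * (p.length : ℕ∞) ≤ G.egirth) : G.dist u v = p.length := by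
  refine (dist_le p).antisymm (not_lt.mp fun hlt => ?_)
  obtain ⟨q, hq, hqlen⟩ := p.reachable.exists_path_of_dist
  have hne : q ≠ p := by rintro rfl; omega
  obtain ⟨_, -, -, c, hc, hclen⟩ := hq.exists_isCycle_length_le_add_of_ne hp hne
  have : 2 * p.length ≤ c.length := by exact_mod_cast hg.trans (egirth_le_length hc)
  omega

theorem Walk.IsCycle.dist_getVert_of_egirth_eq_length {c : G.Walk u u} (hc : c.IsCycle)
    (hg : G.egirth = c.length) {i : ℕ} (hi : i ≤ c.length) :
    G.dist u (c.getVert i) = min i (c.length - i) := by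
  have h3 := hc.three_le_length
  rcases le_total (2 * i) c.length with hle | hle
  · have hlen : (c.take i).length = i := by simp only [take_length]; omega
    rw [(hc.isPath_take (by omega)).dist_eq_length_of_two_mul_length_le_egirth
      (by rw [hg, hlen]; exact_mod_cast hle), hlen]
    omega
  · have hlen : (c.drop i).length = c.length - i := drop_length c i
    rw [dist_comm, (hc.isPath_drop (by omega)).dist_eq_length_of_two_mul_length_le_egirth
      (by rw [hg, hlen]; norm_cast; omega), hlen]
    omega

end SimpleGraph

/-- Critical edge of a shortest cycle: if `c` is a cycle of length exactly the girth
`g` and `w` is a vertex on it (taken as its base point), then there is an edge `{v,x}`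
of `c` with `g = dist w v + dist w x + 1`. -/
theorem shortest_cycle_critical_edge
    {V : Type*} (G : SimpleGraph V)
    (g : ℕ) (hg : G.egirth = (g : ℕ∞))
    {w : V} (c : G.Walk w w) (hc : c.IsCycle) (hlen : c.length = g) :
    ∃ v x : V, s(v, x) ∈ c.edges ∧ g = G.dist w v + G.dist w x + 1 := by
  subst hlen
  have h3 := hc.three_le_length
  set a := (c.length - 1) / 2
  refine ⟨c.getVert a, c.getVert (a + 1), c.mk_mem_edges_iff_exists.mpr ⟨a, by omega, rfl⟩, ?_⟩
  rw [hc.dist_getVert_of_egirth_eq_length hg (by omega),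
    hc.dist_getVert_of_egirth_eq_length hg (by omega)]
  omega
end

section
/- Let G be a connected simple graph on a finite vertex set V equipped with a linear order ≺, and let k be a natural number. Say that (a, u) is lexicographically smaller than (b, z) if a < b, or a = b and u ≺ z; define the k-nearest-neighborhood Q_k(v) = { z ∈ V : the number of vertices u with (dist(v,u), u) lexicographically smaller than (dist(v,z), z) is less than k }. If z ∈ Q_k(v), x is adjacent to v, and dist(x,z) = dist(v,z) − 1 (i.e., x lies on a shortest path from v to z), then z ∈ Q_k(x). -/
/-- The `k`-nearest-neighborhood of `v`: the set of vertices `z` such that fewer than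
`k` vertices `u` satisfy `(dist v u, u) <lex (dist v z, z)`, where ties in distance are
broken by the fixed linear order on the vertices. -/
def nearestNbhd {V : Type*} [Fintype V] [LinearOrder V]
    (G : SimpleGraph V) (k : ℕ) (v : V) : Set V :=
  {z | (Finset.univ.filter fun u : V =>
      G.dist v u < G.dist v z ∨ (G.dist v u = G.dist v z ∧ u < z)).card < k}

/-- If `z` is among the `k` nearest vertices of `v`, `x` is adjacent to `v`, and `x`
lies on a shortest path from `v` to `z` (i.e. `dist x z = dist v z - 1`), then `z`
is among the `k` nearest vertices of `x`. -/
theorem nearestNbhd_closed_along_shortest_path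
    {V : Type*} [Fintype V] [LinearOrder V]
    (G : SimpleGraph V) (hG : G.Connected) (k : ℕ)
    (v x z : V)
    (hz : z ∈ nearestNbhd G k v)
    (hadj : G.Adj x v)
    (hx : G.dist x z = G.dist v z - 1) :
    z ∈ nearestNbhd G k x := by
  classical
  simp only [nearestNbhd, Set.mem_setOf_eq] at hz ⊢
  have hxv : G.dist x v = 1 := SimpleGraph.dist_eq_one_iff_adj.mpr hadj
  have hvx : G.dist v x = 1 := by rw [SimpleGraph.dist_comm]; exact hxv
  by_cases hvz : G.dist v z = 0
  · have hxz : G.dist x z = 0 := by omega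
    have hxez : x = z := hG.dist_eq_zero_iff.mp hxz
    have hvez : v = z := hG.dist_eq_zero_iff.mp hvz
    exact absurd hadj (by rw [hxez, hvez]; exact G.irrefl)
  · have key : G.dist v z = G.dist x z + 1 := by omega
    refine lt_of_le_of_lt (Finset.card_le_card ?_) hz
    intro u hu
    simp only [Finset.mem_filter, Finset.mem_univ, true_and] at hu ⊢
    have tri : G.dist v u ≤ G.dist v x + G.dist x u := hG.dist_triangle
    rcases hu with h | ⟨h, hlt⟩
    · left; omega
    · rcases lt_or_eq_of_le (show G.dist v u ≤ G.dist v z by omega) with h' | h'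
      · left; exact h'
      · right; exact ⟨h', hlt⟩
end
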